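/- arXiv:1610.05994 — 4 statements merged into one kernel-verified Lean document; each statement's English description precedes it below -/
import Mathlib

section
/- Let $S : \text{Fin } n \to \text{Fin } 2^l$ be a sequence, $i \le l$ a level, and define $\text{node}(j) = S(j) \gg (l-i)$. Define the placement function $\pi(j) = P(\text{node}(j)) + |\{ j' < j : \text{node}(j') = \text{node}(j) \}|$, where $P(v) = |\{ j : \text{node}(j) < v \}|$. Then $\pi$ is a bijection from $\text{Fin } n$ to $\text{Fin } n$. -/
/-- The stable counting sort placement at level `i` is a bijection of `Fin n`. -/
theorem stmt5 (n l i : ℕ) (hi : i ≤ l) (S : Fin n → Fin (2 ^ l)) :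
    ∃ π : Fin n ≃ Fin n, ∀ j : Fin n,
      (π j : ℕ) =
        (Finset.univ.filter
          (fun j' : Fin n => (S j' : ℕ) >>> (l - i) < (S j : ℕ) >>> (l - i))).card +
        (Finset.univ.filter
          (fun j' : Fin n => j' < j ∧ (S j' : ℕ) >>> (l - i) = (S j : ℕ) >>> (l - i))).card := by
  classical
  set node : Fin n → ℕ := fun j => (S j : ℕ) >>> (l - i) with hnode
  set A : Fin n → Finset (Fin n) :=
    fun j => Finset.univ.filter (fun j' => node j' < node j) with hA
  set B : Fin n → Finset (Fin n) :=
    fun j => Finset.univ.filter (fun j' => j' < j ∧ node j' = node j) with hB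
  have hdisj : ∀ j, Disjoint (A j) (B j) := by
    intro j
    simp only [Finset.disjoint_left, hA, hB, Finset.mem_filter, Finset.mem_univ, true_and]
    rintro a ha ⟨_, he⟩
    omega
  have hnotmem : ∀ j, j ∉ A j ∪ B j := by
    intro j
    simp [hA, hB]
  have hbound : ∀ j, (A j).card + (B j).card < n := by
    intro j
    rw [← Finset.card_union_of_disjoint (hdisj j)]
    have h1 : (A j ∪ B j) ⊆ Finset.univ.erase j := by
      intro x hx
      refine Finset.mem_erase.mpr ⟨?_, Finset.mem_univ x⟩
      rintro rfl; exact hnotmem x hx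
    have := Finset.card_le_card h1
    rw [Finset.card_erase_of_mem (Finset.mem_univ j), Finset.card_univ, Fintype.card_fin] at this
    have hn : (j:ℕ) < n := j.isLt
    omega
  have key : ∀ j k : Fin n, (node j < node k ∨ (node j = node k ∧ j < k)) →
      (A j).card + (B j).card < (A k).card + (B k).card := by
    intro j k hjk
    rcases hjk with h | ⟨he, hlt⟩
    · have hsub : insert j (A j ∪ B j) ⊆ A k := by
        intro x hx
        simp only [Finset.mem_insert, Finset.mem_union, hA, hB, Finset.mem_filter,
          Finset.mem_univ, true_and] at hx ⊢
        rcases hx with rfl | h1 | ⟨_, h2⟩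
        · exact h
        · omega
        · omega
      have hc := Finset.card_le_card hsub
      rw [Finset.card_insert_of_notMem (hnotmem j),
        Finset.card_union_of_disjoint (hdisj j)] at hc
      have hle : (A k).card ≤ (A k).card + (B k).card := Nat.le_add_right _ _
      omega
    · have hAeq : A j = A k := by
        ext x
        simp only [hA, Finset.mem_filter, Finset.mem_univ, true_and]
        rw [he]
      have hj : j ∉ B j := by simp [hB]
      have hsub : insert j (B j) ⊆ B k := by
        intro x hx
        simp only [Finset.mem_insert, hB, Finset.mem_filter, Finset.mem_univ, true_and] at hx ⊢
        rcases hx with rfl | ⟨h1, h2⟩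
        · exact ⟨hlt, he⟩
        · exact ⟨lt_trans h1 hlt, h2.trans he⟩
      have hc := Finset.card_le_card hsub
      rw [Finset.card_insert_of_notMem hj] at hc
      have hAc : (A j).card = (A k).card := by rw [hAeq]
      omega
  let f : Fin n → Fin n := fun j => ⟨(A j).card + (B j).card, hbound j⟩
  have hinj : Function.Injective f := by
    intro j k h
    by_contra hne
    have hv : (A j).card + (B j).card = (A k).card + (B k).card := congrArg Fin.val h
    rcases lt_trichotomy (node j) (node k) with h1 | h1 | h1
    · exact absurd hv (Nat.ne_of_lt (key j k (Or.inl h1)))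
    · rcases lt_trichotomy j k with h2 | h2 | h2
      · exact absurd hv (Nat.ne_of_lt (key j k (Or.inr ⟨h1, h2⟩)))
      · exact hne h2
      · exact absurd hv.symm (Nat.ne_of_lt (key k j (Or.inr ⟨h1.symm, h2⟩)))
    · exact absurd hv.symm (Nat.ne_of_lt (key k j (Or.inl h1)))
  exact ⟨Equiv.ofBijective f ((Fintype.bijective_iff_injective_and_card f).mpr
    ⟨hinj, rfl⟩), fun j => rfl⟩
end

section
/- Wavelet tree access correctness (two-level case, generalizable by induction on $l$): Let $S : \text{Fin } n \to \text{Fin } 2^l$ with $l \ge 1$, let $B$ be the root bitmap defined by $B(j) = $ the most significant bit of $S(j)$ (bit $l-1$), let $S_0$ be the subsequence of $S$ (in order) of symbols with top bit 0 and $S_1$ of those with top bit 1, each with the top bit removed. Then for any position $p$: if $B(p) = 0$ then $S(p) = S_0(\text{rank}_0(B, p))$, and if $B(p) = 1$ then $S(p) = 2^{l-1} + S_1(\text{rank}_1(B, p))$. -/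
/-!
Filtering a list keeps the relative order of the surviving entries, so the entry at position `p`,
if it survives, lands at the position given by the number of survivors strictly before `p`, which
is the rank. Since `S p < 2 ^ l`, stripping bit `l - 1` only subtracts `2 ^ (l - 1)` times that bit.
-/

open Finset

theorem List.getElem?_filter_countP_take {α : Type*} {q : α → Bool} :
    ∀ {L : List α} {p : ℕ} {a : α}, L[p]? = some a → q a →
      (L.filter q)[(L.take p).countP q]? = some a
  | [], _, _, h, _ => by simp at h
  | b :: L, 0, a, h, hq => by simp_all
  | b :: L, p + 1, a, h, hq => by
    have ih := List.getElem?_filter_countP_take (q := q) (L := L) (p := p) h hq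
    by_cases hb : q b <;> simpa [List.filter_cons, List.countP_cons, hb] using ih

theorem Fin.card_filter_val_lt_and_eq_countP_take {α : Type*} :
    ∀ {n : ℕ} (f : Fin n → α) (q : α → Bool) (m : ℕ),
      #{j : Fin n | (j : ℕ) < m ∧ q (f j) = true} = ((List.ofFn f).take m).countP q
  | 0, _, _, _ => by simp
  | n + 1, f, q, 0 => by simp
  | n + 1, f, q, m + 1 => by
    rw [Fin.card_filter_univ_succ', List.ofFn_succ, List.take_succ_cons, List.countP_cons,
      ← Fin.card_filter_val_lt_and_eq_countP_take (fun j => f j.succ) q m]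
    simp [add_comm]

theorem Fin.getElem?_filter_ofFn_rank {α : Type*} {n : ℕ} (f : Fin n → α) (q : α → Bool)
    (p : Fin n) (hq : q (f p)) :
    ((List.ofFn f).filter q)[#{j : Fin n | (j : ℕ) < p ∧ q (f j) = true}]? = some (f p) := by
  rw [Fin.card_filter_val_lt_and_eq_countP_take]
  exact List.getElem?_filter_countP_take (by simp) hq

theorem Nat.eq_two_pow_mul_toNat_testBit_add_mod {s k : ℕ} (hs : s < 2 ^ (k + 1)) :
    s = 2 ^ k * (s.testBit k).toNat + s % 2 ^ k := by
  conv_lhs => rw [← Nat.mod_eq_of_lt hs]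
  rw [Nat.mod_pow_succ, Nat.toNat_testBit, add_comm]

theorem stmt9_general (n l : ℕ) (S : Fin n → Fin (2 ^ l)) (p : Fin n) :
    let B : Fin n → Bool := fun j => Nat.testBit (S j) (l - 1)
    let T : List ℕ := List.ofFn fun j => (S j : ℕ)
    let S0 : List ℕ := (T.filter fun s => !Nat.testBit s (l - 1)).map fun s => s % 2 ^ (l - 1)
    let S1 : List ℕ := (T.filter fun s => Nat.testBit s (l - 1)).map fun s => s % 2 ^ (l - 1)
    let rank : Bool → ℕ → ℕ := fun c q =>
      (Finset.univ.filter (fun j : Fin n => (j : ℕ) < q ∧ B j = c)).card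
    (B p = false → S0[rank false p]? = some (S p : ℕ)) ∧
    (B p = true → ∃ x, S1[rank true p]? = some x ∧ (S p : ℕ) = 2 ^ (l - 1) + x) := by
  intro B T S0 S1 rank
  have hS : (S p : ℕ) = 2 ^ (l - 1) * (B p).toNat + S p % 2 ^ (l - 1) :=
    Nat.eq_two_pow_mul_toNat_testBit_add_mod <|
      (S p).2.trans_le (Nat.pow_le_pow_right two_pos (by omega))
  constructor
  · intro hB
    have hsel := Fin.getElem?_filter_ofFn_rank (fun j => (S j : ℕ))
      (fun s => !Nat.testBit s (l - 1)) p (by simpa [B] using hB)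
    simp only [Bool.not_eq_true'] at hsel
    rw [hB, Bool.toNat_false, mul_zero, zero_add] at hS
    simp only [S0, rank, B, T, List.getElem?_map, hsel, Option.map_some, ← hS]
  · intro hB
    have hsel := Fin.getElem?_filter_ofFn_rank (fun j => (S j : ℕ))
      (fun s => Nat.testBit s (l - 1)) p hB
    rw [hB, Bool.toNat_true, mul_one] at hS
    exact ⟨_, by simp only [S1, rank, B, T, List.getElem?_map, hsel, Option.map_some], hS⟩

/-- Wavelet tree access correctness at the root level: following the bit of the
root bitmap and a rank query recovers the symbol from the child subsequence. -/
theorem stmt9 (n l : ℕ) (hl : 1 ≤ l) (S : Fin n → Fin (2 ^ l)) (p : Fin n) :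
    let B : Fin n → Bool := fun j => Nat.testBit (S j) (l - 1)
    let T : List ℕ := List.ofFn fun j => (S j : ℕ)
    let S0 : List ℕ := (T.filter fun s => !Nat.testBit s (l - 1)).map fun s => s % 2 ^ (l - 1)
    let S1 : List ℕ := (T.filter fun s => Nat.testBit s (l - 1)).map fun s => s % 2 ^ (l - 1)
    let rank : Bool → ℕ → ℕ := fun c q =>
      (Finset.univ.filter (fun j : Fin n => (j : ℕ) < q ∧ B j = c)).card
    (B p = false → S0[rank false p]? = some (S p : ℕ)) ∧
    (B p = true → ∃ x, S1[rank true p]? = some x ∧ (S p : ℕ) = 2 ^ (l - 1) + x) :=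
  stmt9_general n l S p
end

section
/- Concatenating partial level bitmaps is correct: with the setup of the domain decomposition, the full level-$i$ bitmap restricted to the block for segment $t$ and node $v$ equals the portion of segment $t$'s partial level-$i$ bitmap corresponding to node $v$; formally, the level-$i$ bitmap of $S$ equals the function that, on position $\text{offset}(t,v) + r$ for $r < c_{t,v}$, returns the $r$-th bit of node $v$ in the partial wavelet tree of segment $S_t$. -/
/-!
The level-`i` bitmap lists the bits node by node, each node's block in position order, so the
nodes `u < v` fill exactly the first `#{node < v}` places. Segments are contiguous runs of
positions (`seg` is monotone), hence inside the block of node `v` the symbols of segments `< t`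
come first and are followed by those of segment `t`, still in position order. The `r`-th bit of
segment `t` at node `v` therefore sits at `offset t v + r`.
-/

namespace List

variable {α : Type*}

theorem filter_append_filter_not_of_pairwise {p : α → Bool} :
    ∀ {L : List α}, L.Pairwise (fun x y => p y → p x) →
      L.filter p ++ L.filter (fun x => !p x) = L
  | [], _ => rfl
  | x :: xs, h => by
    obtain ⟨hx, hxs⟩ := pairwise_cons.mp h
    by_cases hpx : p x
    · simp [hpx, filter_append_filter_not_of_pairwise hxs]
    · have hnone : ∀ y ∈ xs, ¬p y := fun y hy hpy => hpx (hx y hy hpy)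
      simpa [hpx, filter_eq_nil_iff.mpr hnone] using hnone

theorem length_filter_add_length_filter_le {p q : α → Bool} (L : List α)
    (h : ∀ x ∈ L, q x → ¬p x) : (L.filter p).length + (L.filter q).length ≤ L.length := by
  rw [← countP_eq_length_filter, ← countP_eq_length_filter, length_eq_countP_add_countP p]
  exact Nat.add_le_add_left (countP_mono_left fun x hx hq => by simpa using h x hx hq) _

theorem getElem?_length_filter_lt_add {β : Type*} [LinearOrder β] {g : α → β} {L : List α}
    (hL : L.Pairwise (fun x y => g x ≤ g y)) (b : β) {r : ℕ}
    (hr : r < (L.filter (fun x => g x = b)).length) :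
    L[(L.filter (fun x => g x < b)).length + r]? = (L.filter (fun x => g x = b))[r]? := by
  set R := L.filter (fun x => !decide (g x < b))
  have hsplitL : L.filter (fun x => g x < b) ++ R = L :=
    filter_append_filter_not_of_pairwise (hL.imp fun hxy hy => by simp at hy ⊢; order)
  have hsplitR : R.filter (fun x => g x = b) ++ R.filter (fun x => !decide (g x = b)) = R :=
    filter_append_filter_not_of_pairwise <| (hL.filter _).imp_of_mem fun {x y} hx _ hxy hy => by
      have : b ≤ g x := by simpa using (mem_filter.mp hx).2
      simp at hy ⊢; order
  have hEq : R.filter (fun x => g x = b) = L.filter (fun x => g x = b) := by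
    simp only [R, filter_filter]
    exact filter_congr fun x _ => by by_cases h : g x = b <;> simp [h]
  calc L[(L.filter (fun x => g x < b)).length + r]?
      = (L.filter (fun x => g x < b) ++ R)[(L.filter (fun x => g x < b)).length + r]? := by
        rw [hsplitL]
    _ = (R.filter (fun x => g x = b) ++ R.filter (fun x => !decide (g x = b)))[r]? := by
        rw [getElem?_append_right (Nat.le_add_right _ _), Nat.add_sub_cancel_left, hsplitR]
    _ = (L.filter (fun x => g x = b))[r]? := by
        rw [getElem?_append_left (hEq ▸ hr), hEq]

theorem getElem?_flatten_map_range {β : Type*} (B : ℕ → List β) {v m s : ℕ} (hv : v < m)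
    (hs : s < (B v).length) :
    ((range m).map B).flatten[((range v).map fun u => (B u).length).sum + s]? = (B v)[s]? := by
  have hlen : ((range v).map fun u => (B u).length).sum = ((range v).map B).flatten.length := by
    simp [length_flatten, Function.comp_def]
  rw [hlen]
  obtain ⟨d, rfl⟩ := Nat.exists_eq_add_of_lt hv
  rw [Nat.add_assoc, range_add, range_succ_eq_map, map_append, flatten_append,
    getElem?_append_right (Nat.le_add_right _ _), Nat.add_sub_cancel_left]
  simp [getElem?_append_left hs]

theorem sum_map_length_filter_eq_length_filter_lt (L : List α) (key : α → ℕ) (v : ℕ) :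
    ((range v).map fun u => (L.filter (fun x => key x = u)).length).sum =
      (L.filter (fun x => key x < v)).length := by
  induction v with
  | zero => simp
  | succ v ih =>
    rw [range_succ, map_append, sum_append, ih, map_singleton, sum_singleton,
      length_eq_countP_add_countP (fun x => decide (key x < v))
        (l := L.filter fun x => key x < v + 1),
      countP_filter, countP_filter, ← countP_eq_length_filter, ← countP_eq_length_filter]
    congr 1 <;>
      exact countP_congr fun x _ => by simp only [Bool.and_eq_true, decide_eq_true_eq]; omega

theorem length_filter_ofFn {n : ℕ} (f : Fin n → α) (p : α → Bool) :
    ((ofFn f).filter p).length = (Finset.univ.filter fun j => p (f j)).card := by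
  rw [ofFn_eq_map, filter_map, length_map, ← toFinset_card_of_nodup ((nodup_finRange n).filter _),
    toFinset_filter, toFinset_finRange]
  rfl

def levelBitmap (L : List α) (node : α → ℕ) (bit : α → Bool) (m : ℕ) : List Bool :=
  ((range m).map fun u => (L.filter fun x => node x = u).map bit).flatten

theorem getElem?_levelBitmap {β : Type*} [LinearOrder β] {L : List α} {seg : α → β}
    (hL : L.Pairwise fun x y => seg x ≤ seg y) (node : α → ℕ) (bit : α → Bool) {v m : ℕ}
    (hv : v < m) (t : β) {r : ℕ}
    (hr : r < ((L.filter fun x => node x = v).filter fun x => seg x = t).length) :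
    (levelBitmap L node bit m)[(L.filter fun x => node x < v).length +
        (((L.filter fun x => node x = v).filter fun x => seg x < t).length + r)]? =
      (((L.filter fun x => node x = v).filter fun x => seg x = t).map bit)[r]? := by
  set M := L.filter fun x => node x = v
  have hlt : (M.filter fun x => seg x < t).length + r < M.length := by
    have := length_filter_add_length_filter_le (p := fun x => decide (seg x < t))
      (q := fun x => decide (seg x = t)) M fun x _ hx => by simp_all
    omega
  have hblocks : ((range v).map fun u => ((L.filter fun x => node x = u).map bit).length).sum =
      (L.filter fun x => node x < v).length := by
    simp only [length_map, sum_map_length_filter_eq_length_filter_lt]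
  rw [levelBitmap, ← hblocks, getElem?_flatten_map_range _ hv (by simpa using hlt), getElem?_map,
    getElem?_length_filter_lt_add (hL.filter _) t hr, getElem?_map]

end List

open List in
theorem stmt11_general (n l i k : ℕ) (S : Fin n → Fin (2 ^ l))
    (seg : Fin n → Fin k) (hseg : Monotone seg) :
    let node : Fin n → ℕ := fun j => (S j : ℕ) >>> (l - i)
    let c : Fin k → ℕ → ℕ := fun t v =>
      (Finset.univ.filter (fun j : Fin n => seg j = t ∧ node j = v)).card
    let offset : Fin k → ℕ → ℕ := fun t v =>
      (Finset.univ.filter (fun j : Fin n => node j < v)).card +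
      (Finset.univ.filter (fun j : Fin n => node j = v ∧ seg j < t)).card
    -- full level-i bitmap: bits grouped by node, in order of position in S
    let full : List Bool :=
      ((List.range (2 ^ i)).map (fun v =>
        (((List.ofFn fun j => (S j : ℕ)).filter fun s => s >>> (l - i) == v).map
          fun s => Nat.testBit s (l - i - 1)))).flatten
    -- bits of node v in the partial wavelet tree of segment t
    let part : Fin k → ℕ → List Bool := fun t v =>
      ((List.ofFn fun j => (seg j, (S j : ℕ))).filter
          (fun x => x.1 == t && x.2 >>> (l - i) == v)).map
        fun x => Nat.testBit x.2 (l - i - 1)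
    ∀ (t : Fin k) (v : Fin (2 ^ i)) (r : ℕ), r < c t (v : ℕ) →
      full[offset t (v : ℕ) + r]? = (part t (v : ℕ))[r]? := by
  intro node c offset full part t v r hr
  set L := List.ofFn fun j => (seg j, (S j : ℕ))
  set key : Fin k × ℕ → ℕ := fun x => x.2 >>> (l - i)
  set bit : Fin k × ℕ → Bool := fun x => x.2.testBit (l - i - 1)
  have hfull : full = levelBitmap L key bit (2 ^ i) := by
    have hsnd : (ofFn fun j => (S j : ℕ)) = L.map Prod.snd := by simp only [L, map_ofFn]; rfl
    simp [full, levelBitmap, hsnd, filter_map, Function.comp_def, key, bit, Bool.beq_eq_decide_eq]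
  have hpart : part t v = ((L.filter fun x => key x = v).filter fun x => x.1 = t).map bit := by
    simp only [part, L, key, bit, filter_filter, Bool.beq_eq_decide_eq]
  have hoffset : offset t v = (L.filter fun x => key x < v).length +
      ((L.filter fun x => key x = v).filter fun x => x.1 < t).length := by
    simp only [offset, L, filter_filter, length_filter_ofFn]
    congr 2 <;> ext j <;> simp [key, node, and_comm]
  have hc : c t v = ((L.filter fun x => key x = v).filter fun x => x.1 = t).length := by
    simp only [c, L, filter_filter, length_filter_ofFn]
    congr 1; ext j; simp [key, node]
  have hsorted : L.Pairwise fun x y => x.1 ≤ y.1 :=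
    (pairwise_ofFn (R := fun x y : Fin k × ℕ => x.1 ≤ y.1)).mpr fun _ _ hab => hseg hab.le
  rw [hfull, hoffset, Nat.add_assoc, getElem?_levelBitmap hsorted key bit v.isLt t (hc ▸ hr),
    hpart]

/-- Merge correctness: within the block of segment `t` and node `v`, the full
level-`i` bitmap coincides with the corresponding portion of segment `t`'s
partial level-`i` bitmap. -/
theorem stmt11 (n l i k : ℕ) (hi : i < l) (S : Fin n → Fin (2 ^ l))
    (seg : Fin n → Fin k) (hseg : Monotone seg) :
    let node : Fin n → ℕ := fun j => (S j : ℕ) >>> (l - i)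
    let c : Fin k → ℕ → ℕ := fun t v =>
      (Finset.univ.filter (fun j : Fin n => seg j = t ∧ node j = v)).card
    let offset : Fin k → ℕ → ℕ := fun t v =>
      (Finset.univ.filter (fun j : Fin n => node j < v)).card +
      (Finset.univ.filter (fun j : Fin n => node j = v ∧ seg j < t)).card
    -- full level-i bitmap: bits grouped by node, in order of position in S
    let full : List Bool :=
      ((List.range (2 ^ i)).map (fun v =>
        (((List.ofFn fun j => (S j : ℕ)).filter fun s => s >>> (l - i) == v).map
          fun s => Nat.testBit s (l - i - 1)))).flatten
    -- bits of node v in the partial wavelet tree of segment t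
    let part : Fin k → ℕ → List Bool := fun t v =>
      ((List.ofFn fun j => (seg j, (S j : ℕ))).filter
          (fun x => x.1 == t && x.2 >>> (l - i) == v)).map
        fun x => Nat.testBit x.2 (l - i - 1)
    ∀ (t : Fin k) (v : Fin (2 ^ i)) (r : ℕ), r < c t (v : ℕ) →
      full[offset t (v : ℕ) + r]? = (part t (v : ℕ))[r]? :=
  stmt11_general n l i k S seg hseg
end

section
/- Rank via wavelet tree root step: with $S$, $B$, $S_0$, $S_1$ as in the access-correctness setup, for any symbol $c < 2^l$ and position $p \le n$: if the top bit of $c$ is 0 then $\text{rank}_c(S, p) = \text{rank}_{c \bmod 2^{l-1}}(S_0, \text{rank}_0(B, p))$, and if the top bit of $c$ is 1 then $\text{rank}_c(S, p) = \text{rank}_{c \bmod 2^{l-1}}(S_1, \text{rank}_1(B, p))$, where $\text{rank}_c(T, q) = |\{ j < q : T(j) = c \}|$. -/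
/-!
Write `l = k + 1`. A symbol `s < 2 ^ (k + 1)` is determined by its top bit `s.testBit k` and its
remainder `s % 2 ^ k`, so the occurrences of `c` among the first `p` symbols are exactly the
occurrences of `c % 2 ^ k` in the child list selected by the top bit of `c`, restricted to the
symbols that come from those first `p` positions. The latter form a prefix of the child list
whose length is the number of positions `j < p` with the same top bit, i.e. the bitmap rank.
-/

namespace List

variable {α β : Type*}

theorem take_countP_filter (P : α → Bool) (L : List α) (p : ℕ) :
    (L.filter P).take ((L.take p).countP P) = (L.take p).filter P := by
  induction L generalizing p with
  | nil => simp
  | cons a L ih =>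
    cases p with
    | zero => simp
    | succ p => by_cases h : P a <;> simp [h, ih]

theorem countP_take_ofFn {n : ℕ} (g : Fin n → α) (P : α → Bool) (p : ℕ) :
    ((ofFn g).take p).countP P =
      (Finset.univ.filter fun j : Fin n => (j : ℕ) < p ∧ P (g j)).card := by
  induction n generalizing p with
  | zero => simp
  | succ n ih =>
    cases p with
    | zero => simp
    | succ p =>
      rw [ofFn_succ, take_succ_cons, countP_cons, ih, Fin.card_filter_univ_succ']
      simp [add_comm]

theorem count_take_eq_count_take_map_filter [DecidableEq α] [DecidableEq β] {L : List α}
    {P : α → Bool} {f : α → β} {c : α} (h : ∀ s ∈ L, s = c ↔ P s ∧ f s = f c) (p : ℕ) :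
    (L.take p).count c =
      (((L.filter P).map f).take ((L.take p).countP P)).count (f c) := by
  rw [← map_take, take_countP_filter, count, count, countP_map, countP_filter]
  refine countP_congr fun s hs => ?_
  simp [h s (mem_of_mem_take hs), and_comm]

end List

theorem Nat.eq_iff_testBit_eq_and_mod_eq {k s c : ℕ} (hs : s < 2 ^ (k + 1))
    (hc : c < 2 ^ (k + 1)) :
    s = c ↔ s.testBit k = c.testBit k ∧ s % 2 ^ k = c % 2 ^ k := by
  refine ⟨by rintro rfl; simp, fun ⟨htop, hmod⟩ => Nat.eq_of_testBit_eq fun i => ?_⟩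
  rcases lt_trichotomy i k with hi | rfl | hi
  · simpa [Nat.testBit_mod_two_pow, hi] using congrArg (Nat.testBit · i) hmod
  · exact htop
  · rw [Nat.testBit_lt_two_pow (hs.trans_le (Nat.pow_le_pow_right two_pos hi)),
      Nat.testBit_lt_two_pow (hc.trans_le (Nat.pow_le_pow_right two_pos hi))]

theorem List.count_take_eq_count_take_map_mod_filter {k c : ℕ} {L : List ℕ}
    (hL : ∀ s ∈ L, s < 2 ^ (k + 1)) (hc : c < 2 ^ (k + 1)) {P : ℕ → Bool}
    (hP : ∀ s, P s ↔ s.testBit k = c.testBit k) (p : ℕ) :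
    (L.take p).count c =
      (((L.filter P).map (· % 2 ^ k)).take ((L.take p).countP P)).count (c % 2 ^ k) :=
  List.count_take_eq_count_take_map_filter
    (fun s hs => (Nat.eq_iff_testBit_eq_and_mod_eq (hL s hs) hc).trans (by rw [hP])) p

theorem stmt19_general (n l : ℕ) (hl : 1 ≤ l) (S : Fin n → Fin (2 ^ l))
    (c : ℕ) (hc : c < 2 ^ l) (p : ℕ) :
    let B : Fin n → Bool := fun j => Nat.testBit (S j) (l - 1)
    let T : List ℕ := List.ofFn fun j => (S j : ℕ)
    let S0 : List ℕ := (T.filter fun s => !Nat.testBit s (l - 1)).map fun s => s % 2 ^ (l - 1)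
    let S1 : List ℕ := (T.filter fun s => Nat.testBit s (l - 1)).map fun s => s % 2 ^ (l - 1)
    let rankB : Bool → ℕ → ℕ := fun b q =>
      (Finset.univ.filter (fun j : Fin n => (j : ℕ) < q ∧ B j = b)).card
    let rank : ℕ → List ℕ → ℕ → ℕ := fun x L q => (L.take q).count x
    (Nat.testBit c (l - 1) = false →
      rank c T p = rank (c % 2 ^ (l - 1)) S0 (rankB false p)) ∧
    (Nat.testBit c (l - 1) = true →
      rank c T p = rank (c % 2 ^ (l - 1)) S1 (rankB true p)) := by
  obtain ⟨k, rfl⟩ := Nat.exists_eq_add_of_le' hl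
  simp only [Nat.add_sub_cancel]
  have hT : ∀ s ∈ List.ofFn (fun j => (S j : ℕ)), s < 2 ^ (k + 1) := by
    simp only [List.mem_ofFn]
    rintro _ ⟨j, rfl⟩
    exact (S j).isLt
  constructor <;> intro hck
  · convert List.count_take_eq_count_take_map_mod_filter hT hc (P := fun s => !s.testBit k)
      (by simp [hck]) p using 3
    rw [List.countP_take_ofFn]
    simp
  · convert List.count_take_eq_count_take_map_mod_filter hT hc (P := fun s => s.testBit k)
      (by simp [hck]) p using 3
    rw [List.countP_take_ofFn]

/-- Rank via the wavelet tree root step: a rank query for symbol `c` up to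
position `p` reduces to a rank query in the child subsequence selected by the
top bit of `c`, at the position given by a bitmap rank on the root bitmap. -/
theorem stmt19 (n l : ℕ) (hl : 1 ≤ l) (S : Fin n → Fin (2 ^ l))
    (c : ℕ) (hc : c < 2 ^ l) (p : ℕ) (hp : p ≤ n) :
    let B : Fin n → Bool := fun j => Nat.testBit (S j) (l - 1)
    let T : List ℕ := List.ofFn fun j => (S j : ℕ)
    let S0 : List ℕ := (T.filter fun s => !Nat.testBit s (l - 1)).map fun s => s % 2 ^ (l - 1)
    let S1 : List ℕ := (T.filter fun s => Nat.testBit s (l - 1)).map fun s => s % 2 ^ (l - 1)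
    let rankB : Bool → ℕ → ℕ := fun b q =>
      (Finset.univ.filter (fun j : Fin n => (j : ℕ) < q ∧ B j = b)).card
    let rank : ℕ → List ℕ → ℕ → ℕ := fun x L q => (L.take q).count x
    (Nat.testBit c (l - 1) = false →
      rank c T p = rank (c % 2 ^ (l - 1)) S0 (rankB false p)) ∧
    (Nat.testBit c (l - 1) = true →
      rank c T p = rank (c % 2 ^ (l - 1)) S1 (rankB true p)) :=
  stmt19_general n l hl S c hc p
end
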